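/- If G is a finitely generated group and N is a finite normal subgroup of G, then G admits an asynchronous combing if and only if G/N admits an asynchronous combing. -/
import Mathlib


section Combings

variable {G : Type*} [Group G]

/-- `S` is a finite, symmetric (inverse-closed) generating set of `G`;
it plays the role of `X ∪ X⁻¹` for a finite generating set `X`. -/
def IsSymmGenSet (S : Set G) : Prop :=
  S.Finite ∧ (∀ x ∈ S, x⁻¹ ∈ S) ∧ Subgroup.closure S = ⊤

/-- The word metric on `G` with respect to the generating set `S`:
the least length of a word over `S` representing `g⁻¹ * h`. -/
noncomputable def wordDist (S : Set G) (g h : G) : ℕ :=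
  sInf {n | ∃ w : List G, (∀ x ∈ w, x ∈ S) ∧ w.length = n ∧ w.prod = g⁻¹ * h}

/-- The point reached at (integer) time `t` along the path in the Cayley graph
starting at the identity and labelled by the word `w`; for `t ≥ |w|` the path
stays at its endpoint. -/
def pathAt (w : List G) (t : ℕ) : G := (w.take t).prod

/-- The paths labelled by `v` and `w` synchronously `K`-fellow travel:
at each time `t` the corresponding points are at distance at most `K`. -/
def SyncFellow (S : Set G) (K : ℕ) (v w : List G) : Prop :=
  ∀ t : ℕ, wordDist S (pathAt v t) (pathAt w t) ≤ K

/-- The paths labelled by `v` and `w` asynchronously `K`-fellow travel: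
there is a monotone unit-speed-bounded reparametrisation `h` of the second path,
starting at `0` and eventually traversing all of `w`, keeping corresponding
points at distance at most `K`. -/
def AsyncFellow (S : Set G) (K : ℕ) (v w : List G) : Prop :=
  ∃ h : ℕ → ℕ, Monotone h ∧ h 0 = 0 ∧ (∀ t, h (t + 1) ≤ h t + 1) ∧
    (∃ T : ℕ, ∀ t, T ≤ t → w.length ≤ h t) ∧
    ∀ t : ℕ, wordDist S (pathAt v t) (pathAt w (h t)) ≤ K

/-- `L` is a language for `G` over `S`: a set of words over `S` that maps onto `G`. -/
def IsLanguageFor (S : Set G) (L : Set (List G)) : Prop :=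
  (∀ w ∈ L, ∀ x ∈ w, x ∈ S) ∧ ∀ g : G, ∃ w ∈ L, w.prod = g

/-- Two words represent group elements that are equal or differ by right
multiplication by a generator from `S`. -/
def GenRelated (S : Set G) (v w : List G) : Prop :=
  v.prod = w.prod ∨ ∃ x ∈ S, w.prod = v.prod * x

/-- `L` is an asynchronous combing for `G` over `S`. -/
def IsAsyncCombing (S : Set G) (L : Set (List G)) : Prop :=
  IsLanguageFor S L ∧ ∃ K : ℕ, ∀ v ∈ L, ∀ w ∈ L, GenRelated S v w → AsyncFellow S K v w

/-- `L` is a synchronous combing for `G` over `S`. -/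
def IsSyncCombing (S : Set G) (L : Set (List G)) : Prop :=
  IsLanguageFor S L ∧ ∃ K : ℕ, ∀ v ∈ L, ∀ w ∈ L, GenRelated S v w → SyncFellow S K v w

/-- `G` admits an asynchronous combing (it is asynchronously combable). -/
def AsyncCombable (G : Type*) [Group G] : Prop :=
  ∃ (S : Set G) (L : Set (List G)), IsSymmGenSet S ∧ IsAsyncCombing S L

end Combings

section Helpers

variable {G : Type*} [Group G] {H : Type*} [Group H] {S : Set G}

lemma exists_word_of_symmGenSet (hS : IsSymmGenSet S) (g : G) :
    ∃ w : List G, (∀ x ∈ w, x ∈ S) ∧ w.prod = g := by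
  have hg : g ∈ Subgroup.closure S := hS.2.2 ▸ Subgroup.mem_top g
  induction hg using Subgroup.closure_induction with
  | mem x hx => exact ⟨[x], by simp [hx], by simp⟩
  | one => exact ⟨[], by simp, by simp⟩
  | mul a b _ _ iha ihb =>
      obtain ⟨wa, ha1, ha2⟩ := iha
      obtain ⟨wb, hb1, hb2⟩ := ihb
      refine ⟨wa ++ wb, ?_, by simp [ha2, hb2]⟩
      intro x hx
      rcases List.mem_append.1 hx with h | h
      exacts [ha1 x h, hb1 x h]
  | inv a _ ih =>
      obtain ⟨w, h1, h2⟩ := ih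
      refine ⟨w.reverse.map (·⁻¹), ?_, ?_⟩
      · intro x hx
        simp only [List.mem_map, List.mem_reverse] at hx
        obtain ⟨y, hy, rfl⟩ := hx
        exact hS.2.1 y (h1 y hy)
      · rw [← h2, List.prod_inv_reverse]
        simp [List.map_reverse]

lemma wordDist_le {g h : G} {w : List G} (hw : ∀ x ∈ w, x ∈ S)
    (hp : w.prod = g⁻¹ * h) : wordDist S g h ≤ w.length :=
  Nat.sInf_le ⟨w, hw, rfl, hp⟩

lemma exists_min_word (hS : IsSymmGenSet S) (g h : G) :
    ∃ w : List G, (∀ x ∈ w, x ∈ S) ∧ w.length = wordDist S g h ∧ w.prod = g⁻¹ * h := by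
  obtain ⟨w, hw, hp⟩ := exists_word_of_symmGenSet hS (g⁻¹ * h)
  have hne : {n | ∃ u : List G, (∀ x ∈ u, x ∈ S) ∧ u.length = n ∧ u.prod = g⁻¹ * h}.Nonempty :=
    ⟨w.length, w, hw, rfl, hp⟩
  exact Nat.sInf_mem hne

lemma wordDist_triangle (hS : IsSymmGenSet S) (a b c : G) :
    wordDist S a c ≤ wordDist S a b + wordDist S b c := by
  obtain ⟨w1, hw1, hl1, hp1⟩ := exists_min_word hS a b
  obtain ⟨w2, hw2, hl2, hp2⟩ := exists_min_word hS b c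
  have hw' : ∀ x ∈ w1 ++ w2, x ∈ S := by
    intro x hx
    rcases List.mem_append.1 hx with h | h
    exacts [hw1 x h, hw2 x h]
  have hp' : (w1 ++ w2).prod = a⁻¹ * c := by
    rw [List.prod_append, hp1, hp2]; group
  have h3 : wordDist S a c ≤ (w1 ++ w2).length := wordDist_le hw' hp'
  simpa [hl1, hl2] using h3

lemma pathAt_of_le {w : List G} {t : ℕ} (h : w.length ≤ t) : pathAt w t = w.prod := by
  unfold pathAt
  rw [List.take_of_length_le h]

lemma pathAt_map (f : G →* H) (w : List G) (t : ℕ) :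
    pathAt (w.map f) t = f (pathAt w t) := by
  unfold pathAt
  rw [← List.map_take, ← map_list_prod]

lemma AsyncFellow.mono {K K' : ℕ} {v w : List G} (hKK : K ≤ K')
    (h : AsyncFellow S K v w) : AsyncFellow S K' v w := by
  obtain ⟨h, hm, h0, hstep, hT, hd⟩ := h
  exact ⟨h, hm, h0, hstep, hT, fun t => le_trans (hd t) hKK⟩

lemma AsyncFellow.unbounded {K : ℕ} {v w : List G} (hvw : AsyncFellow S K v w) :
    ∃ h : ℕ → ℕ, Monotone h ∧ h 0 = 0 ∧ (∀ t, h (t + 1) ≤ h t + 1) ∧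
      (∃ T : ℕ, ∀ t, T ≤ t → w.length ≤ h t) ∧
      (∀ t : ℕ, wordDist S (pathAt v t) (pathAt w (h t)) ≤ K) ∧
      (∀ n : ℕ, ∃ t, n ≤ h t) := by
  obtain ⟨h, hm, h0, hstep, ⟨T, hT⟩, hd⟩ := hvw
  refine ⟨fun t => max (h t) (t - T), ?_, by simp [h0], ?_, ⟨T, ?_⟩, ?_, ?_⟩
  · exact fun a b hab => max_le_max (hm hab) (Nat.sub_le_sub_right hab T)
  · intro t
    refine max_le (le_trans (hstep t) ?_) ?_
    · exact Nat.add_le_add_right (le_max_left _ _) 1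
    · calc t + 1 - T ≤ (t - T) + 1 := by omega
        _ ≤ max (h t) (t - T) + 1 := Nat.add_le_add_right (le_max_right _ _) 1
  · intro t ht
    exact le_trans (hT t ht) (le_max_left _ _)
  · intro t
    show wordDist S (pathAt v t) (pathAt w (max (h t) (t - T))) ≤ K
    rcases le_or_gt (t - T) (h t) with hle | hlt
    · rw [max_eq_left hle]
      exact hd t
    · have hTt : T ≤ t := by omega
      have h1 : w.length ≤ h t := hT t hTt
      have h2 : w.length ≤ max (h t) (t - T) := le_trans h1 (le_max_left _ _)
      rw [pathAt_of_le h2, ← pathAt_of_le h1]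
      exact hd t
  · intro n
    refine ⟨n + T, le_trans ?_ (le_max_right _ _)⟩
    omega

lemma AsyncFellow.trans (hS : IsSymmGenSet S) {K1 K2 : ℕ} {u v w : List G}
    (h1 : AsyncFellow S K1 u v) (h2 : AsyncFellow S K2 v w) :
    AsyncFellow S (K1 + K2) u w := by
  obtain ⟨f, hfm, hf0, hfstep, ⟨T1, hT1⟩, hfd, hfub⟩ := h1.unbounded
  obtain ⟨g, hgm, hg0, hgstep, ⟨T2, hT2⟩, hgd⟩ := h2
  refine ⟨g ∘ f, hgm.comp hfm, by simp [hf0, hg0], ?_, ?_, ?_⟩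
  · intro t
    calc g (f (t + 1)) ≤ g (f t + 1) := hgm (hfstep t)
      _ ≤ g (f t) + 1 := hgstep (f t)
  · obtain ⟨t0, ht0⟩ := hfub T2
    refine ⟨t0, fun t ht => ?_⟩
    exact hT2 (f t) (le_trans ht0 (hfm ht))
  · intro t
    calc wordDist S (pathAt u t) (pathAt w (g (f t)))
        ≤ wordDist S (pathAt u t) (pathAt v (f t)) +
          wordDist S (pathAt v (f t)) (pathAt w (g (f t))) := wordDist_triangle hS _ _ _
      _ ≤ K1 + K2 := Nat.add_le_add (hfd t) (hgd (f t))

lemma chain_fellow (hS : IsSymmGenSet S) {L : Set (List G)} {K : ℕ}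
    (hLang : IsLanguageFor S L)
    (hK : ∀ v ∈ L, ∀ w ∈ L, GenRelated S v w → AsyncFellow S K v w)
    (xs : List G) (hxs : ∀ x ∈ xs, x ∈ S) :
    ∀ v ∈ L, ∀ w ∈ L, w.prod = v.prod * xs.prod →
      AsyncFellow S ((xs.length + 1) * K) v w := by
  induction xs using List.reverseRecOn with
  | nil =>
      intro v hv w hw hp
      simp only [List.prod_nil, mul_one] at hp
      simpa using hK v hv w hw (Or.inl hp.symm)
  | append_singleton ys x ih =>
      intro v hv w hw hp
      obtain ⟨u, hu, hup⟩ := hLang.2 (v.prod * ys.prod)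
      have hys : ∀ y ∈ ys, y ∈ S := fun y hy => hxs y (by simp [hy])
      have h1 : AsyncFellow S ((ys.length + 1) * K) v u := ih hys v hv u hu hup
      have hx : x ∈ S := hxs x (by simp)
      have h2 : AsyncFellow S K u w := by
        refine hK u hu w hw (Or.inr ⟨x, hx, ?_⟩)
        rw [hp, hup, List.prod_append, List.prod_singleton, mul_assoc]
      have := h1.trans hS h2
      have hlen : (ys ++ [x]).length + 1 = (ys.length + 1) + 1 := by simp
      rw [hlen, add_mul, one_mul]
      exact this

lemma wordDist_image_le (hS : IsSymmGenSet S) (f : G →* H) (a b : G) :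
    wordDist (f '' S) (f a) (f b) ≤ wordDist S a b := by
  obtain ⟨w, hw, hl, hp⟩ := exists_min_word hS a b
  rw [← hl]
  have := wordDist_le (S := f '' S) (g := f a) (h := f b) (w := w.map f) ?_ ?_
  · simpa using this
  · intro x hx
    obtain ⟨y, hy, rfl⟩ := List.mem_map.1 hx
    exact ⟨y, hw y hy, rfl⟩
  · rw [← map_list_prod, hp]
    simp

end Helpers


section QuotientDirections

variable {G : Type*} [Group G]

lemma asyncCombable_quotient_of (N : Subgroup G) [N.Normal] (hN : (N : Set G).Finite) :
    AsyncCombable G → AsyncCombable (G ⧸ N) := by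
  rintro ⟨S, L, hS, hLang, K, hK⟩
  set π : G →* G ⧸ N := QuotientGroup.mk' N with hπ
  choose f hf1 hf2 using exists_word_of_symmGenSet hS
  obtain ⟨C, hC⟩ : ∃ C : ℕ, ∀ n ∈ (N : Set G), (f n).length ≤ C := by
    obtain ⟨C, hC⟩ := (hN.image (fun n => (f n).length)).bddAbove
    exact ⟨C, fun n hn => hC ⟨n, hn, rfl⟩⟩
  refine ⟨π '' S, (List.map π) '' L, ⟨hS.1.image _, ?_, ?_⟩, ⟨?_, ?_⟩, (C + 2) * K, ?_⟩
  · rintro x ⟨y, hy, rfl⟩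
    exact ⟨y⁻¹, hS.2.1 y hy, by simp⟩
  · rw [← MonoidHom.map_closure, hS.2.2]
    exact Subgroup.map_top_of_surjective π (QuotientGroup.mk'_surjective N)
  · rintro wq ⟨w, hw, rfl⟩ x hx
    obtain ⟨y, hy, rfl⟩ := List.mem_map.1 hx
    exact ⟨y, hLang.1 w hw y hy, rfl⟩
  · intro q
    obtain ⟨g, rfl⟩ := QuotientGroup.mk'_surjective N q
    obtain ⟨w, hw, hwp⟩ := hLang.2 g
    exact ⟨w.map π, ⟨w, hw, rfl⟩, by rw [← map_list_prod, hwp]⟩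
  · rintro vq ⟨v, hv, rfl⟩ wq ⟨w, hw, rfl⟩ hrel
    have key : ∃ xs : List G, (∀ x ∈ xs, x ∈ S) ∧ xs.length ≤ C + 1 ∧
        w.prod = v.prod * xs.prod := by
      rcases hrel with heq | ⟨x', ⟨x, hx, rfl⟩, hx'⟩
      · have hm : v.prod⁻¹ * w.prod ∈ N := by
          have : π (v.prod⁻¹ * w.prod) = 1 := by
            have hv' : π v.prod = π w.prod := by
              rw [map_list_prod, map_list_prod]; exact heq
            simp [hv']
          rwa [← QuotientGroup.ker_mk' N, MonoidHom.mem_ker]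
        refine ⟨f _, hf1 _, le_trans (hC _ hm) (by omega), ?_⟩
        rw [hf2]; group
      · have hm : x⁻¹ * (v.prod⁻¹ * w.prod) ∈ N := by
          have : π (x⁻¹ * (v.prod⁻¹ * w.prod)) = 1 := by
            have hv' : π w.prod = π v.prod * π x := by
              rw [map_list_prod, map_list_prod]; exact hx'
            simp [hv', mul_assoc]
          rwa [← QuotientGroup.ker_mk' N, MonoidHom.mem_ker]
        refine ⟨x :: f (x⁻¹ * (v.prod⁻¹ * w.prod)), ?_, ?_, ?_⟩
        · intro y hy
          rcases List.mem_cons.1 hy with rfl | hy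
          exacts [hx, hf1 _ y hy]
        · simpa using Nat.add_le_add_right (hC _ hm) 1
        · rw [List.prod_cons, hf2]; group
    obtain ⟨xs, hxs, hlen, hp⟩ := key
    have hfel : AsyncFellow S ((C + 2) * K) v w :=
      (chain_fellow hS hLang hK xs hxs v hv w hw hp).mono
        (Nat.mul_le_mul_right K (by omega))
    obtain ⟨h, hm, h0, hstep, ⟨T, hT⟩, hd⟩ := hfel
    refine ⟨h, hm, h0, hstep, ⟨T, fun t ht => by simpa using hT t ht⟩, fun t => ?_⟩
    rw [pathAt_map, pathAt_map]
    exact le_trans (wordDist_image_le hS π _ _) (hd t)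

lemma pathAt_lift {G : Type*} [Group G] {H : Type*} [Group H] (π : G →* H) (σ : H → G)
    (hσ : ∀ q, π (σ q) = q) (v : List H) (n : G) (hn : π n = 1) (t : ℕ) :
    π (pathAt (v.map σ ++ [n]) t) = pathAt v t := by
  have hcomp : ⇑π ∘ σ = id := funext hσ
  unfold pathAt
  rw [List.take_append, List.prod_append, map_mul]
  have h1 : π (List.take t (v.map σ)).prod = (List.take t v).prod := by
    rw [map_list_prod, List.map_take, List.map_map, hcomp, List.map_id]
  have h2 : π (List.take (t - (v.map σ).length) [n]).prod = 1 := by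
    rcases Nat.eq_zero_or_pos (t - (v.map σ).length) with h | h
    · rw [h]; simp
    · rw [List.take_of_length_le (show ([n] : List G).length ≤ t - (v.map σ).length by
        simp only [List.length_singleton]; omega)]
      simpa using hn
  rw [h1, h2, mul_one]

lemma asyncCombable_of_quotient {G : Type*} [Group G] (N : Subgroup G) [N.Normal]
    (hN : (N : Set G).Finite) :
    AsyncCombable (G ⧸ N) → AsyncCombable G := by
  rintro ⟨SQ, LQ, hSQ, hLQ, K, hK⟩
  set π : G →* G ⧸ N := QuotientGroup.mk' N with hπdef
  set σ : G ⧸ N → G := Quotient.out with hσdef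
  have hσ : ∀ q, π (σ q) = q := fun q => QuotientGroup.out_eq' q
  have hcomp : ⇑π ∘ σ = id := funext hσ
  have hker : ∀ g : G, π g = 1 ↔ g ∈ N := by
    intro g
    exact (MonoidHom.mem_ker (f := π)).symm.trans (by rw [QuotientGroup.ker_mk'])
  have hπσprod : ∀ w : List (G ⧸ N), π ((w.map σ).prod) = w.prod := by
    intro w
    rw [map_list_prod, List.map_map, hcomp, List.map_id]
  set SG : Set G := (σ '' SQ ∪ (σ '' SQ)⁻¹) ∪ (N : Set G) with hSGdef
  set LG : Set (List G) := {W : List G | ∃ v ∈ LQ, ∃ n ∈ N, W = List.map σ v ++ [n]}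
    with hLGdef
  have hσSG : ∀ y ∈ SQ, σ y ∈ SG := fun y hy => Or.inl (Or.inl ⟨y, hy, rfl⟩)
  have hNSG : ∀ n : G, n ∈ N → n ∈ SG := fun n hn => Or.inr hn
  have hprod : ∀ (v : List (G ⧸ N)) (n : G), n ∈ N →
      π ((List.map σ v ++ [n]).prod) = v.prod := by
    intro v n hn
    rw [List.prod_append, map_mul, hπσprod, List.prod_singleton, (hker n).2 hn, mul_one]
  -- the key distance estimate
  have hdist : ∀ a b : G, wordDist SG a b ≤ wordDist SQ (π a) (π b) + 1 := by
    intro a b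
    obtain ⟨ys, hys, hyl, hyp⟩ := exists_min_word hSQ (π a) (π b)
    set c : G := (ys.map σ).prod with hcdef
    set n : G := c⁻¹ * (a⁻¹ * b) with hndef
    have hnN : n ∈ N := by
      refine (hker n).1 ?_
      rw [hndef]
      simp only [map_mul, map_inv]
      rw [hcdef, hπσprod, hyp]
      group
    have hle := wordDist_le (S := SG) (g := a) (h := b) (w := ys.map σ ++ [n]) ?_ ?_
    · calc wordDist SG a b ≤ (ys.map σ ++ [n]).length := hle
        _ = ys.length + 1 := by simp
        _ = wordDist SQ (π a) (π b) + 1 := by rw [hyl]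
    · intro x hx
      rcases List.mem_append.1 hx with h | h
      · obtain ⟨y, hy, rfl⟩ := List.mem_map.1 h
        exact hσSG y (hys y hy)
      · rw [List.mem_singleton.1 h]
        exact hNSG n hnN
    · rw [List.prod_append, List.prod_singleton, ← hcdef, hndef]
      group
  refine ⟨SG, LG, ⟨?_, ?_, ?_⟩, ⟨?_, ?_⟩, K + 1, ?_⟩
  · exact (((hSQ.1.image σ).union (hSQ.1.image σ).inv).union hN)
  · rintro x ((hx | hx) | hx)
    · exact Or.inl (Or.inr (by rwa [Set.mem_inv, inv_inv]))
    · exact Or.inl (Or.inl (Set.mem_inv.1 hx))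
    · exact Or.inr (inv_mem (s := N) hx)
  · rw [eq_top_iff]
    rintro g -
    obtain ⟨w, hw, hwp⟩ := exists_word_of_symmGenSet hSQ (π g)
    have ha : (w.map σ).prod ∈ Subgroup.closure SG := by
      refine Subgroup.list_prod_mem _ ?_
      intro x hx
      obtain ⟨y, hy, rfl⟩ := List.mem_map.1 hx
      exact Subgroup.subset_closure (hσSG y (hw y hy))
    have hgn : g * ((w.map σ).prod)⁻¹ ∈ N := by
      refine (hker _).1 ?_
      rw [map_mul, map_inv, hπσprod, hwp]
      group
    have hg : g = (g * ((w.map σ).prod)⁻¹) * (w.map σ).prod := by group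
    rw [hg]
    exact mul_mem (Subgroup.subset_closure (hNSG _ hgn)) ha
  · rintro W ⟨v, hv, n, hn, rfl⟩ x hx
    rcases List.mem_append.1 hx with h | h
    · obtain ⟨y, hy, rfl⟩ := List.mem_map.1 h
      exact hσSG y (hLQ.1 v hv y hy)
    · rw [List.mem_singleton.1 h]
      exact hNSG n hn
  · intro g
    obtain ⟨w, hw, hwp⟩ := hLQ.2 (π g)
    set n : G := ((w.map σ).prod)⁻¹ * g with hndef
    have hnN : n ∈ N := by
      refine (hker n).1 ?_
      rw [hndef, map_mul, map_inv, hπσprod, hwp]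
      group
    refine ⟨List.map σ w ++ [n], ⟨w, hw, n, hnN, rfl⟩, ?_⟩
    rw [List.prod_append, List.prod_singleton, hndef]
    group
  · rintro V ⟨v, hv, n, hn, rfl⟩ W ⟨w, hw, m, hm, rfl⟩ hrel
    have hπV : ∀ t, π (pathAt (List.map σ v ++ [n]) t) = pathAt v t :=
      pathAt_lift π σ hσ v n ((hker n).2 hn)
    have hπW : ∀ t, π (pathAt (List.map σ w ++ [m]) t) = pathAt w t :=
      pathAt_lift π σ hσ w m ((hker m).2 hm)
    have hgr : GenRelated SQ v w := by
      rcases hrel with heq | ⟨x, hx, he⟩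
      · left
        have := congrArg π heq
        rwa [hprod v n hn, hprod w m hm] at this
      · have hπe : w.prod = v.prod * π x := by
          have := congrArg π he
          rwa [hprod w m hm, map_mul, hprod v n hn] at this
        rcases hx with (hx | hx) | hx
        · obtain ⟨y, hy, rfl⟩ := hx
          exact Or.inr ⟨y, hy, by rwa [hσ y] at hπe⟩
        · obtain ⟨y, hy, hyx⟩ := Set.mem_inv.1 hx
          have : π x = y⁻¹ := by
            rw [← hσ y, hyx]
            simp
          exact Or.inr ⟨y⁻¹, hSQ.2.1 y hy, by rwa [this] at hπe⟩
        · have : π x = 1 := (hker x).2 hx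
          rw [this, mul_one] at hπe
          exact Or.inl hπe.symm
    obtain ⟨h, hmo, h0, hstep, ⟨T, hT⟩, hd, hub⟩ := (hK v hv w hw hgr).unbounded
    refine ⟨h, hmo, h0, hstep, ?_, ?_⟩
    · obtain ⟨t0, ht0⟩ := hub (w.length + 1)
      refine ⟨t0, fun t ht => ?_⟩
      have hlen : (List.map σ w ++ [m]).length = w.length + 1 := by simp
      rw [hlen]
      exact le_trans ht0 (hmo ht)
    · intro t
      calc wordDist SG (pathAt (List.map σ v ++ [n]) t)
            (pathAt (List.map σ w ++ [m]) (h t))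
          ≤ wordDist SQ (π (pathAt (List.map σ v ++ [n]) t))
            (π (pathAt (List.map σ w ++ [m]) (h t))) + 1 := hdist _ _
        _ = wordDist SQ (pathAt v t) (pathAt w (h t)) + 1 := by rw [hπV, hπW]
        _ ≤ K + 1 := Nat.add_le_add_right (hd t) 1

end QuotientDirections

/-- For a finite normal subgroup `N` of a finitely generated group `G`, the
group `G` admits an asynchronous combing if and only if `G/N` does. -/
theorem asyncCombable_quotient_iff {G : Type*} [Group G] [Group.FG G]
    (N : Subgroup G) [N.Normal] (hN : (N : Set G).Finite) :
    AsyncCombable G ↔ AsyncCombable (G ⧸ N) :=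
  ⟨asyncCombable_quotient_of N hN, asyncCombable_of_quotient N hN⟩
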